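/- arXiv:0801.3330 — 2 statements merged into one kernel-verified Lean document; each statement's English description precedes it below -/
import Mathlib

section
/- If μ is a nondegenerate critical offspring distribution with finite nonzero variance σ², then for a random walk (W_n) with i.i.d. steps distributed as ξ−1 (ξ ~ μ), one has sup_{n ≥ 1} sup_{x ≥ 0} x·P(W_n = x) < ∞. -/
/-!
Encode the law of `ξ` by its generating function `G = ∑ μ k X ^ k ∈ ℝ≥0∞⟦X⟧`, so that
convolution is multiplication and `P(W_n = x)` is the coefficient of `X ^ (x + n)` in `G ^ n`.

Local bound: pick two atoms `a ≠ b` of mass at least `p` and write `G = p (X ^ a + X ^ b) + ν`.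
In the binomial expansion of `G ^ n`, a coefficient of `(X ^ a + X ^ b) ^ j` is at most
`j.choose (j / 2) ≤ 2 ^ j * √(2 / (j + 1))`, and Cauchy–Schwarz against the binomial weights gives
`P(W_n = x) ≤ (p (n + 1))^(-1/2)`.

Tail bound: the Euler operator `X d/dX` is a derivation, so the Leibniz rule computes the first
two moments of `G ^ n` from those of `G`; thus `Var W_n = n σ²`, and Chebyshev bounds
`P(2 W_n ≥ x)` by `4 n σ² / x²`.

For `x ≤ √n` the local bound suffices. Otherwise split `W_n` into independent walks of `⌊n/2⌋`
and `⌈n/2⌉` steps: on `{W_n = x}` one of them is at least `x / 2` (probability `O(n / x²)`) and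
the other then takes a prescribed value (probability `O(1 / √n)`); as `x > √n`, the product
is `O(1 / x)`.
-/

open scoped ENNReal

/-- `P(W_n = x)` for the random walk with `n` i.i.d. steps distributed
as `ξ - 1`, `ξ ~ μ`, started at `0`. -/
noncomputable def walkProb (μ : ℕ → ℝ≥0∞) (n : ℕ) (x : ℤ) : ℝ≥0∞ :=
  ∑' ξ : Fin n → ℕ,
    if (∑ i : Fin n, ((ξ i : ℤ) - 1)) = x then ∏ i : Fin n, μ (ξ i) else 0

open scoped NNReal
open Finset PowerSeries

theorem Nat.centralBinom_sq_mul_le (j : ℕ) : j.centralBinom ^ 2 * (3 * j + 1) ≤ 16 ^ j := by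
  induction j with
  | zero => simp
  | succ n ih =>
    refine Nat.le_of_mul_le_mul_left ?_ (show 0 < (n + 1) ^ 2 * (3 * n + 1) by positivity)
    calc (n + 1) ^ 2 * (3 * n + 1) * ((n + 1).centralBinom ^ 2 * (3 * (n + 1) + 1))
        = ((n + 1) * (n + 1).centralBinom) ^ 2 * ((3 * n + 1) * (3 * n + 4)) := by ring
      _ = 4 * (2 * n + 1) ^ 2 * (3 * n + 4) * (n.centralBinom ^ 2 * (3 * n + 1)) := by
        rw [Nat.succ_mul_centralBinom_succ]; ring
      _ ≤ 4 * (2 * n + 1) ^ 2 * (3 * n + 4) * 16 ^ n := Nat.mul_le_mul_left _ ih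
      _ ≤ 16 * (n + 1) ^ 2 * (3 * n + 1) * 16 ^ n := Nat.mul_le_mul_right _ (by nlinarith)
      _ = (n + 1) ^ 2 * (3 * n + 1) * 16 ^ (n + 1) := by ring

theorem Nat.choose_half_sq_mul_le (m : ℕ) : m.choose (m / 2) ^ 2 * (m + 1) ≤ 2 * 4 ^ m := by
  rcases Nat.even_or_odd' m with ⟨j, rfl | rfl⟩
  · calc (2 * j).choose (2 * j / 2) ^ 2 * (2 * j + 1) ≤ j.centralBinom ^ 2 * (3 * j + 1) := by
          rw [Nat.centralBinom, Nat.mul_div_cancel_left j two_pos]; gcongr; omega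
      _ ≤ 16 ^ j := Nat.centralBinom_sq_mul_le j
      _ ≤ 2 * 4 ^ (2 * j) := by rw [pow_mul]; norm_num
  · have hc : 2 * (2 * j + 1).choose j = (j + 1).centralBinom := by
      rw [Nat.centralBinom, show 2 * (j + 1) = 2 * j + 1 + 1 by ring, Nat.choose_succ_succ',
        Nat.choose_symm_half]
      ring
    refine Nat.le_of_mul_le_mul_left ?_ (show 0 < 4 by norm_num)
    calc 4 * ((2 * j + 1).choose ((2 * j + 1) / 2) ^ 2 * (2 * j + 1 + 1))
        = (j + 1).centralBinom ^ 2 * (2 * j + 2) := by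
          rw [show (2 * j + 1) / 2 = j by omega, ← hc]; ring
      _ ≤ (j + 1).centralBinom ^ 2 * (3 * (j + 1) + 1) := Nat.mul_le_mul_left _ (by omega)
      _ ≤ 16 ^ (j + 1) := Nat.centralBinom_sq_mul_le (j + 1)
      _ ≤ 4 * (2 * 4 ^ (2 * j + 1)) := by rw [pow_succ, pow_succ, pow_mul]; norm_num; omega

theorem NNReal.mul_sum_choose_mul_pow_mul_inv_le (q r : ℝ≥0) (n : ℕ) :
    (n + 1) * q * ∑ j ∈ range (n + 1), n.choose j * q ^ j * r ^ (n - j) * ((j : ℝ≥0) + 1)⁻¹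
      ≤ (q + r) ^ (n + 1) := by
  rw [add_pow, sum_range_succ' _ (n + 1), mul_sum]
  refine le_add_right (sum_le_sum fun j hj => le_of_eq ?_)
  have hc : ((n : ℝ≥0) + 1) * n.choose j = (n + 1).choose (j + 1) * ((j : ℝ≥0) + 1) := by
    exact_mod_cast Nat.add_one_mul_choose_eq n j
  rw [show n + 1 - (j + 1) = n - j by omega]
  calc (n + 1) * q * (n.choose j * q ^ j * r ^ (n - j) * ((j : ℝ≥0) + 1)⁻¹)
      = ((n + 1) * n.choose j) * ((j : ℝ≥0) + 1)⁻¹ * q ^ (j + 1) * r ^ (n - j) := by ring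
    _ = q ^ (j + 1) * r ^ (n - j) * (n + 1).choose (j + 1) := by
      rw [hc, mul_assoc _ ((j : ℝ≥0) + 1), mul_inv_cancel₀ (by positivity)]; ring

theorem NNReal.mul_sq_sum_choose_mul_choose_half_le {p r : ℝ≥0} (hp : p ≠ 0) (h : 2 * p + r = 1)
    (n : ℕ) :
    (n + 1) * (∑ j ∈ range (n + 1), n.choose j * (p ^ j * j.choose (j / 2)) * r ^ (n - j)) ^ 2
      ≤ p⁻¹ := by
  set w : ℕ → ℝ≥0 := fun j => n.choose j * (2 * p) ^ j * r ^ (n - j)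
  have hw : ∑ j ∈ range (n + 1), w j = 1 := by
    have : (2 * p + r) ^ n = 1 := by rw [h, one_pow]
    rw [← this, add_pow]; exact sum_congr rfl fun j _ => by ring
  have hCS := sum_sq_le_sum_mul_sum_of_sq_le_mul (range (n + 1)) (f := w)
    (g := fun j => 2 * (w j * ((j : ℝ≥0) + 1)⁻¹))
    (r := fun j => n.choose j * (p ^ j * j.choose (j / 2)) * r ^ (n - j))
    (fun _ _ => by positivity) (fun _ _ => by positivity) fun j _ => by
      have hmid : ((j.choose (j / 2) : ℝ≥0)) ^ 2 ≤ 2 * 4 ^ j * ((j : ℝ≥0) + 1)⁻¹ := by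
        rw [le_mul_inv_iff₀ (by positivity)]
        exact_mod_cast Nat.choose_half_sq_mul_le j
      calc (n.choose j * (p ^ j * j.choose (j / 2)) * r ^ (n - j) : ℝ≥0) ^ 2
          = (n.choose j * p ^ j * r ^ (n - j)) ^ 2 * (j.choose (j / 2) : ℝ≥0) ^ 2 := by ring
        _ ≤ (n.choose j * p ^ j * r ^ (n - j)) ^ 2 * (2 * 4 ^ j * ((j : ℝ≥0) + 1)⁻¹) := by
          gcongr
        _ = w j * (2 * (w j * ((j : ℝ≥0) + 1)⁻¹)) := by
          simp only [w]
          rw [show (4 : ℝ≥0) ^ j = (2 ^ j) ^ 2 by rw [← pow_mul, mul_comm, pow_mul]; norm_num]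
          ring
  rw [hw, one_mul, ← mul_sum] at hCS
  have hbin := NNReal.mul_sum_choose_mul_pow_mul_inv_le (2 * p) r n
  rw [h, one_pow] at hbin
  calc (n + 1) * (∑ j ∈ range (n + 1), n.choose j * (p ^ j * j.choose (j / 2)) * r ^ (n - j)) ^ 2
      ≤ (n + 1) * (2 * ∑ j ∈ range (n + 1), w j * ((j : ℝ≥0) + 1)⁻¹) := by gcongr
    _ = p⁻¹ * ((n + 1) * (2 * p) * ∑ j ∈ range (n + 1), w j * ((j : ℝ≥0) + 1)⁻¹) := by
      field_simp
    _ ≤ p⁻¹ := mul_le_of_le_one_right' hbin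

theorem ENNReal.le_add_one_of_sq_le {a b : ℝ≥0∞} (h : a ^ 2 ≤ b) : a ≤ b + 1 := by
  rcases le_total a 1 with ha | ha
  · exact ha.trans le_add_self
  · calc a ≤ a ^ 2 := by rw [sq]; exact le_mul_of_one_le_left' ha
      _ ≤ b + 1 := h.trans le_self_add

theorem ENNReal.mul_mul_le_of_sq_mul_le {x c m τ s A B : ℝ≥0∞} (hx0 : x ≠ 0)
    (hxt : x ≠ ⊤) (hc0 : c ≠ 0) (hct : c ≠ ⊤) (hτ : x ^ 2 * τ ≤ m * A) (hs : c * s ≤ B)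
    (hm : m ≤ c * x) : x * (τ * s) ≤ A * B := by
  refine (ENNReal.mul_le_mul_iff_left (mul_ne_zero hc0 hx0) (ENNReal.mul_ne_top hct hxt)).mp ?_
  calc x * (τ * s) * (c * x) = (x ^ 2 * τ) * (c * s) := by ring
    _ ≤ (m * A) * B := by gcongr
    _ ≤ (c * x * A) * B := by gcongr
    _ = A * B * (c * x) := by ring

namespace PowerSeries

noncomputable def tsumCoeff : ℝ≥0∞⟦X⟧ →+* ℝ≥0∞ where
  toFun f := ∑' n, coeff n f
  map_one' := by simp [coeff_one]
  map_mul' f g := by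
    simp_rw [coeff_mul]
    calc ∑' n, ∑ ij ∈ antidiagonal n, coeff ij.1 f * coeff ij.2 g
        = ∑' x : Σ n, antidiagonal n, coeff x.2.1.1 f * coeff x.2.1.2 g := by
          rw [ENNReal.tsum_sigma']
          exact tsum_congr fun n =>
            (Finset.tsum_subtype _ (fun ij : ℕ × ℕ => coeff ij.1 f * coeff ij.2 g)).symm
      _ = ∑' ij : ℕ × ℕ, coeff ij.1 f * coeff ij.2 g :=
          HasAntidiagonal.sigmaAntidiagonalEquivProd.tsum_eq (fun ij => coeff ij.1 f * coeff ij.2 g)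
      _ = (∑' n, coeff n f) * ∑' n, coeff n g := by
          rw [ENNReal.tsum_prod (f := fun i j => coeff i f * coeff j g)]
          simp_rw [ENNReal.tsum_mul_left, ENNReal.tsum_mul_right]
  map_zero' := by simp
  map_add' f g := by simp [ENNReal.tsum_add]

theorem tsumCoeff_apply (f : ℝ≥0∞⟦X⟧) : tsumCoeff f = ∑' n, coeff n f := rfl

theorem coeff_le_tsumCoeff (f : ℝ≥0∞⟦X⟧) (n : ℕ) : coeff n f ≤ tsumCoeff f :=
  ENNReal.le_tsum n

theorem tsumCoeff_C (c : ℝ≥0∞) : tsumCoeff (C c) = c := by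
  simp [tsumCoeff_apply, coeff_C]

theorem tsumCoeff_X : tsumCoeff X = 1 := by
  simp [tsumCoeff_apply, coeff_X]

theorem coeff_mul_le (f g : ℝ≥0∞⟦X⟧) (N : ℕ) :
    coeff N (f * g) ≤ tsumCoeff f * ⨆ n, coeff n g := by
  rw [coeff_mul, Nat.sum_antidiagonal_eq_sum_range_succ_mk]
  calc ∑ k ∈ range (N + 1), coeff k f * coeff (N - k) g
      ≤ ∑ k ∈ range (N + 1), coeff k f * ⨆ n, coeff n g := by
        gcongr with k; exact le_iSup (fun n => coeff n g) _
    _ ≤ tsumCoeff f * ⨆ n, coeff n g := by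
        rw [← sum_mul]; gcongr; exact ENNReal.sum_le_tsum _

variable {R : Type*}

noncomputable def restrict [Semiring R] (p : ℕ → Prop) [DecidablePred p] (f : R⟦X⟧) : R⟦X⟧ :=
  mk fun n => if p n then coeff n f else 0

theorem coeff_mul_le_add_of_forall_or (p q : ℕ → Prop) [DecidablePred p] [DecidablePred q]
    {N : ℕ} (h : ∀ i j, i + j = N → p i ∨ q j) (f g : ℝ≥0∞⟦X⟧) :
    coeff N (f * g) ≤ coeff N (restrict p f * g) + coeff N (f * restrict q g) := by
  simp_rw [coeff_mul, ← sum_add_distrib, restrict, coeff_mk]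
  refine sum_le_sum fun ij hij => ?_
  rcases h ij.1 ij.2 (mem_antidiagonal.mp hij) with hp | hq
  · simp [hp]
  · simp [hq]

theorem coeff_mk_pow (μ : ℕ → ℝ≥0∞) (n N : ℕ) :
    coeff N (mk μ ^ n) = ∑' ξ : Fin n → ℕ, if ∑ i, ξ i = N then ∏ i, μ (ξ i) else 0 := by
  classical
  have h := coeff_prod (fun _ : Fin n => mk μ) N univ
  rw [prod_const, card_univ, Fintype.card_fin] at h
  rw [h, ← Finsupp.equivFunOnFinite.tsum_eq, tsum_eq_sum (s := finsuppAntidiag univ N)]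
  · refine sum_congr rfl fun l hl => ?_
    rw [mem_finsuppAntidiag] at hl
    simp [hl.1]
  · intro l hl
    simp_all [mem_finsuppAntidiag]

variable (R) in
noncomputable def eulerDerivation [CommSemiring R] : Derivation R R⟦X⟧ R⟦X⟧ :=
  (X : R⟦X⟧) • derivative R

theorem coeff_eulerDerivation [CommSemiring R] (f : R⟦X⟧) (n : ℕ) :
    coeff n (eulerDerivation R f) = n * coeff n f := by
  rcases n with _ | n
  · simp [eulerDerivation, coeff_zero_X_mul]
  · simp [eulerDerivation, coeff_succ_X_mul, coeff_derivative, mul_comm]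

theorem tsumCoeff_eulerDerivation (f : ℝ≥0∞⟦X⟧) :
    tsumCoeff (eulerDerivation ℝ≥0∞ f) = ∑' n, n * coeff n f := by
  simp [tsumCoeff_apply, coeff_eulerDerivation]

theorem tsumCoeff_eulerDerivation_eulerDerivation (f : ℝ≥0∞⟦X⟧) :
    tsumCoeff (eulerDerivation ℝ≥0∞ (eulerDerivation ℝ≥0∞ f)) = ∑' n, n ^ 2 * coeff n f := by
  simp [tsumCoeff_apply, coeff_eulerDerivation, sq, mul_assoc]

section Moments

local notation "θ" => eulerDerivation ℝ≥0∞

variable {f : ℝ≥0∞⟦X⟧}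

theorem tsumCoeff_eulerDerivation_pow (h1 : tsumCoeff f = 1) (hm : tsumCoeff (θ f) = 1)
    (n : ℕ) : tsumCoeff (θ (f ^ n)) = n := by
  induction n with
  | zero => simp
  | succ n ih =>
    rw [pow_succ, Derivation.leibniz]
    simp only [smul_eq_mul, map_add, map_mul, map_pow, h1, hm, ih]
    push_cast; ring

theorem tsumCoeff_eulerDerivation_eulerDerivation_pow (h1 : tsumCoeff f = 1)
    (hm : tsumCoeff (θ f) = 1) {s : ℝ≥0∞} (hs : tsumCoeff (θ (θ f)) = s + 1) (n : ℕ) :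
    tsumCoeff (θ (θ (f ^ n))) = n ^ 2 + n * s := by
  induction n with
  | zero => simp
  | succ n ih =>
    rw [pow_succ, Derivation.leibniz, map_add, smul_eq_mul, smul_eq_mul, Derivation.leibniz,
      Derivation.leibniz]
    simp only [smul_eq_mul, map_add, map_mul, map_pow, h1, hm, hs, ih,
      tsumCoeff_eulerDerivation_pow h1 hm]
    push_cast; ring

theorem tsum_ofReal_sq_sub_mul_coeff_add_sq (h1 : tsumCoeff f = 1) {m : ℕ}
    (hm : tsumCoeff (θ f) = m) :
    ∑' k : ℕ, ENNReal.ofReal (((k : ℝ) - m) ^ 2) * coeff k f + (m : ℝ≥0∞) ^ 2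
      = tsumCoeff (θ (θ f)) := by
  have key (k : ℕ) : ENNReal.ofReal (((k : ℝ) - m) ^ 2) + 2 * m * k = (k : ℝ≥0∞) ^ 2 + m ^ 2 := by
    have h : ((k : ℝ) - m) ^ 2 + 2 * m * k = (k : ℝ) ^ 2 + m ^ 2 := by ring
    have := congrArg ENNReal.ofReal h
    rw [ENNReal.ofReal_add (by positivity) (by positivity),
      ENNReal.ofReal_add (by positivity) (by positivity), ENNReal.ofReal_mul (by positivity),
      ENNReal.ofReal_mul (by positivity), ENNReal.ofReal_pow k.cast_nonneg,
      ENNReal.ofReal_pow m.cast_nonneg] at this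
    simpa using this
  have hsum := congrArg (fun F : ℕ → ℝ≥0∞ => ∑' k, F k * coeff k f) (funext key)
  simp only [add_mul, ENNReal.tsum_add, mul_assoc, ENNReal.tsum_mul_left] at hsum
  rw [← tsumCoeff_eulerDerivation, hm, ← tsumCoeff_apply, h1, mul_one,
    ← tsumCoeff_eulerDerivation_eulerDerivation, show 2 * ((m : ℝ≥0∞) * m) = m ^ 2 + m ^ 2 by ring,
    ← add_assoc] at hsum
  exact (ENNReal.add_left_inj (by simp)).mp hsum

theorem sq_mul_tsumCoeff_restrict_le (f : ℝ≥0∞⟦X⟧) (m x : ℕ) :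
    (x : ℝ≥0∞) ^ 2 * tsumCoeff (restrict (fun k => x + 2 * m ≤ 2 * k) f)
      ≤ 4 * ∑' k : ℕ, ENNReal.ofReal (((k : ℝ) - m) ^ 2) * coeff k f := by
  rw [tsumCoeff_apply, ← ENNReal.tsum_mul_left, ← ENNReal.tsum_mul_left]
  refine ENNReal.tsum_le_tsum fun k => ?_
  simp only [restrict, coeff_mk]
  split_ifs with h
  · have hx : ((x : ℝ) ^ 2) ≤ 4 * ((k : ℝ) - m) ^ 2 := by
      have : (x : ℝ) ≤ 2 * ((k : ℝ) - m) := by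
        have : ((x + 2 * m : ℕ) : ℝ) ≤ ((2 * k : ℕ) : ℝ) := by exact_mod_cast h
        push_cast at this; linarith
      nlinarith [(x.cast_nonneg : (0 : ℝ) ≤ x)]
    rw [← mul_assoc]
    gcongr
    calc (x : ℝ≥0∞) ^ 2 = ENNReal.ofReal ((x : ℝ) ^ 2) := by
          rw [ENNReal.ofReal_pow x.cast_nonneg, ENNReal.ofReal_natCast]
      _ ≤ ENNReal.ofReal (4 * ((k : ℝ) - m) ^ 2) := ENNReal.ofReal_le_ofReal hx
      _ = 4 * ENNReal.ofReal (((k : ℝ) - m) ^ 2) := by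
          rw [ENNReal.ofReal_mul (by norm_num), ENNReal.ofReal_ofNat]
  · simp

theorem tsum_ofReal_sq_sub_mul_coeff_pow (h1 : tsumCoeff f = 1) (hm : tsumCoeff (θ f) = 1)
    {s : ℝ≥0∞} (hs : tsumCoeff (θ (θ f)) = s + 1) (n : ℕ) :
    ∑' k : ℕ, ENNReal.ofReal (((k : ℝ) - n) ^ 2) * coeff k (f ^ n) = n * s := by
  have h := tsum_ofReal_sq_sub_mul_coeff_add_sq (by rw [map_pow, h1, one_pow])
    (tsumCoeff_eulerDerivation_pow h1 hm n)
  rw [tsumCoeff_eulerDerivation_eulerDerivation_pow h1 hm hs, add_comm ((n : ℝ≥0∞) ^ 2)] at h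
  exact (ENNReal.add_left_inj (by simp)).mp h

theorem sq_mul_tsumCoeff_restrict_pow_le (h1 : tsumCoeff f = 1) (hm : tsumCoeff (θ f) = 1)
    {s : ℝ≥0∞} (hs : tsumCoeff (θ (θ f)) = s + 1) (n x : ℕ) :
    (x : ℝ≥0∞) ^ 2 * tsumCoeff (restrict (fun k => x + 2 * n ≤ 2 * k) (f ^ n)) ≤ n * (4 * s) := by
  refine (sq_mul_tsumCoeff_restrict_le _ n x).trans_eq ?_
  rw [tsum_ofReal_sq_sub_mul_coeff_pow h1 hm hs]
  ring

end Moments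

theorem coeff_X_pow_add_X_pow_pow_le {a b : ℕ} (hab : a ≠ b) (j i : ℕ) :
    coeff i ((X ^ a + X ^ b : ℝ≥0∞⟦X⟧) ^ j) ≤ j.choose (j / 2) := by
  classical
  have hinj : Set.InjOn (fun k => a * k + b * (j - k)) (range (j + 1)) := by
    intro k hk k' hk' h
    simp only [coe_range, Set.mem_Iio] at hk hk'
    have h' : ((a : ℤ) - b) * k = ((a : ℤ) - b) * k' := by
      have := congrArg (Nat.cast (R := ℤ)) h
      push_cast [Nat.cast_sub (show k ≤ j by omega), Nat.cast_sub (show k' ≤ j by omega)] at this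
      linarith
    exact_mod_cast mul_left_cancel₀ (sub_ne_zero.mpr (Int.natCast_inj.not.mpr hab)) h'
  have hcard : #{k ∈ range (j + 1) | i = a * k + b * (j - k)} ≤ 1 :=
    card_le_one.mpr fun k hk k' hk' => hinj (mem_filter.mp hk).1 (mem_filter.mp hk').1
      ((mem_filter.mp hk).2.symm.trans (mem_filter.mp hk').2)
  obtain ⟨k₀, hk₀⟩ := card_le_one_iff_subset_singleton.mp hcard
  have hterm (k : ℕ) : coeff i ((X ^ a) ^ k * (X ^ b) ^ (j - k) * (j.choose k : ℝ≥0∞⟦X⟧))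
      = if i = a * k + b * (j - k) then (j.choose k : ℝ≥0∞) else 0 := by
    rw [← pow_mul, ← pow_mul, ← pow_add, ← map_natCast (C (R := ℝ≥0∞)), coeff_mul_C, coeff_X_pow]
    split_ifs <;> simp
  rw [add_pow, map_sum]
  simp_rw [hterm]
  rw [← sum_filter]
  calc ∑ k ∈ range (j + 1) with i = a * k + b * (j - k), (j.choose k : ℝ≥0∞)
      ≤ ∑ k ∈ {k₀}, (j.choose k : ℝ≥0∞) := sum_le_sum_of_subset hk₀
    _ ≤ j.choose (j / 2) := by simpa using Nat.choose_le_middle k₀ j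

theorem mul_sq_coeff_pow_le {G : ℝ≥0∞⟦X⟧} (hG : tsumCoeff G = 1) {a b : ℕ} (hab : a ≠ b)
    {p : ℝ≥0} (hp : p ≠ 0) (ha : (p : ℝ≥0∞) ≤ coeff a G) (hb : (p : ℝ≥0∞) ≤ coeff b G)
    (n k : ℕ) : (n + 1) * coeff k (G ^ n) ^ 2 ≤ (p⁻¹ : ℝ≥0) := by
  set κ : ℝ≥0∞⟦X⟧ := C (p : ℝ≥0∞) * (X ^ a + X ^ b)
  set ν : ℝ≥0∞⟦X⟧ := mk fun i => coeff i G - coeff i κ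
  have hκG (i : ℕ) : coeff i κ ≤ coeff i G := by
    simp only [κ, coeff_C_mul, map_add, coeff_X_pow]
    split_ifs with h₁ h₂ <;> subst_vars <;> simp_all
  have hG_eq : G = κ + ν := by
    ext i; simp [ν, add_tsub_cancel_of_le (hκG i)]
  have hmass : 2 * (p : ℝ≥0∞) + tsumCoeff ν = 1 := by
    rw [← hG, hG_eq, map_add]
    simp [κ, tsumCoeff_C, tsumCoeff_X, two_mul, mul_add]
  obtain ⟨r, hr⟩ : ∃ r : ℝ≥0, tsumCoeff ν = r :=
    ⟨_, (ENNReal.coe_toNNReal (ne_top_of_le_ne_top ENNReal.one_ne_top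
      (hmass ▸ le_add_self))).symm⟩
  have h : 2 * p + r = 1 := by rw [hr] at hmass; exact_mod_cast hmass
  have hκ (j i : ℕ) : coeff i (κ ^ j) ≤ p ^ j * j.choose (j / 2) := by
    rw [mul_pow, ← map_pow, coeff_C_mul]
    gcongr
    exact coeff_X_pow_add_X_pow_pow_le hab j i
  set S : ℝ≥0 := ∑ j ∈ range (n + 1), n.choose j * (p ^ j * j.choose (j / 2)) * r ^ (n - j)
  have hbound : coeff k (G ^ n) ≤ S := by
    rw [hG_eq, add_pow, map_sum]
    push_cast [S]
    refine sum_le_sum fun j _ => ?_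
    rw [← map_natCast (C (R := ℝ≥0∞)), coeff_mul_C, mul_comm (κ ^ j)]
    calc coeff k (ν ^ (n - j) * κ ^ j) * n.choose j
        ≤ tsumCoeff (ν ^ (n - j)) * (p ^ j * j.choose (j / 2)) * n.choose j := by
          gcongr
          exact (coeff_mul_le _ _ _).trans (by gcongr; exact iSup_le (hκ j))
      _ = n.choose j * (p ^ j * j.choose (j / 2)) * r ^ (n - j) := by
          rw [map_pow, hr]; ring
  calc ((n : ℝ≥0∞) + 1) * coeff k (G ^ n) ^ 2 ≤ ((n : ℝ≥0∞) + 1) * (S : ℝ≥0∞) ^ 2 := by gcongr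
    _ ≤ ((p⁻¹ : ℝ≥0) : ℝ≥0∞) := by
        exact_mod_cast NNReal.mul_sq_sum_choose_mul_choose_half_le hp h n

theorem exists_sqrt_mul_coeff_pow_le {G : ℝ≥0∞⟦X⟧} (hG : tsumCoeff G = 1) {a b : ℕ}
    (hab : a ≠ b) (ha : coeff a G ≠ 0) (hb : coeff b G ≠ 0) :
    ∃ K < ⊤, ∀ n k, ((Nat.sqrt n : ℝ≥0∞) + 1) * coeff k (G ^ n) ≤ K := by
  have hfin (i : ℕ) : coeff i G ≠ ⊤ :=
    ne_top_of_le_ne_top ENNReal.one_ne_top (hG ▸ coeff_le_tsumCoeff G i)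
  set p : ℝ≥0 := (min (coeff a G) (coeff b G)).toNNReal
  have hp_coe : (p : ℝ≥0∞) = min (coeff a G) (coeff b G) :=
    ENNReal.coe_toNNReal (ne_top_of_le_ne_top (hfin a) (min_le_left _ _))
  have hp : p ≠ 0 := by
    rw [← ENNReal.coe_ne_zero, hp_coe]; exact (lt_min (pos_iff_ne_zero.mpr ha)
      (pos_iff_ne_zero.mpr hb)).ne'
  refine ⟨2 * (p⁻¹ : ℝ≥0) + 1, by simp [ENNReal.mul_lt_top], fun n k => ?_⟩
  refine ENNReal.le_add_one_of_sq_le ?_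
  have hsqrt : ((Nat.sqrt n + 1) ^ 2 : ℝ≥0∞) ≤ 2 * (n + 1) := by
    exact_mod_cast (by nlinarith [Nat.sqrt_le' n] : (Nat.sqrt n + 1) ^ 2 ≤ 2 * (n + 1))
  calc (((Nat.sqrt n : ℝ≥0∞) + 1) * coeff k (G ^ n)) ^ 2
      = ((Nat.sqrt n + 1) ^ 2 : ℝ≥0∞) * coeff k (G ^ n) ^ 2 := by ring
    _ ≤ 2 * (n + 1) * coeff k (G ^ n) ^ 2 := by gcongr
    _ ≤ 2 * (p⁻¹ : ℝ≥0) := by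
        rw [mul_assoc]; gcongr
        exact mul_sq_coeff_pow_le hG hab hp (hp_coe ▸ min_le_left _ _)
          (hp_coe ▸ min_le_right _ _) n k

theorem natCast_mul_coeff_pow_le {G : ℝ≥0∞⟦X⟧} {K V : ℝ≥0∞}
    (hloc : ∀ n k, ((Nat.sqrt n : ℝ≥0∞) + 1) * coeff k (G ^ n) ≤ K)
    (htail : ∀ n x : ℕ,
      (x : ℝ≥0∞) ^ 2 * tsumCoeff (restrict (fun k => x + 2 * n ≤ 2 * k) (G ^ n)) ≤ n * V)
    (n x : ℕ) : x * coeff (x + n) (G ^ n) ≤ K + 2 * (V * K) := by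
  rcases le_or_gt x (Nat.sqrt n) with hx | hx
  · calc (x : ℝ≥0∞) * coeff (x + n) (G ^ n)
        ≤ ((Nat.sqrt n : ℝ≥0∞) + 1) * coeff (x + n) (G ^ n) := by
          gcongr; exact le_add_right (by exact_mod_cast hx)
      _ ≤ K := hloc n _
      _ ≤ _ := le_self_add
  have half (k l : ℕ) (hkl : k ≤ (Nat.sqrt l + 1) ^ 2) (hl : l ≤ n) (N : ℕ) :
      x * coeff N (restrict (fun i => x + 2 * k ≤ 2 * i) (G ^ k) * G ^ l) ≤ V * K := by
    have hlx : Nat.sqrt l + 1 ≤ x := by have := Nat.sqrt_le_sqrt hl; omega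
    have hkx : (k : ℝ≥0∞) ≤ ((Nat.sqrt l : ℝ≥0∞) + 1) * x := by
      exact_mod_cast hkl.trans (by rw [sq]; exact Nat.mul_le_mul_left _ hlx)
    refine (mul_le_mul_right (coeff_mul_le _ _ _) _).trans
      (ENNReal.mul_mul_le_of_sq_mul_le (by simp; omega) (by simp) (by simp) (by simp)
        (htail k x) ?_ hkx)
    rw [ENNReal.mul_iSup]
    exact iSup_le (hloc l)
  set m := n / 2
  set l := n - m
  have hsplit := coeff_mul_le_add_of_forall_or (fun i => x + 2 * m ≤ 2 * i)
    (fun j => x + 2 * l ≤ 2 * j) (N := x + n) (by intro i j h; omega) (G ^ m) (G ^ l)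
  rw [← pow_add, show m + l = n by omega, mul_comm (G ^ m)] at hsplit
  have hm : m < (Nat.sqrt m + 1) ^ 2 := Nat.lt_succ_sqrt' m
  have hl : l < (Nat.sqrt l + 1) ^ 2 := Nat.lt_succ_sqrt' l
  calc (x : ℝ≥0∞) * coeff (x + n) (G ^ n)
      ≤ x * coeff (x + n) (restrict _ (G ^ m) * G ^ l)
        + x * coeff (x + n) (restrict _ (G ^ l) * G ^ m) := by
        rw [← mul_add]; gcongr
    _ ≤ V * K + V * K := add_le_add (half m l (by omega) (by omega) _)
        (half l m (by omega) (by omega) _)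
    _ ≤ K + 2 * (V * K) := by rw [← two_mul]; exact le_add_self

end PowerSeries

theorem walkProb_natCast (μ : ℕ → ℝ≥0∞) (n x : ℕ) :
    walkProb μ n x = coeff (x + n) (mk μ ^ n) := by
  rw [coeff_mk_pow, walkProb]
  refine tsum_congr fun ξ => if_congr ?_ rfl rfl
  rw [sum_sub_distrib, sum_const, card_univ, Fintype.card_fin, nsmul_one]
  push_cast [← Nat.cast_sum]
  omega

theorem exists_ne_and_ne_zero_of_variance_pos (μ : ℕ → ℝ≥0∞) (σ2 : ℝ) (hμ : ∑' k, μ k = 1)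
    (hmean : ∑' k : ℕ, (k : ℝ≥0∞) * μ k = 1)
    (hvar : ∑' k : ℕ, ENNReal.ofReal (((k : ℝ) - 1) ^ 2) * μ k = ENNReal.ofReal σ2)
    (hσpos : 0 < σ2) : ∃ a b, a ≠ b ∧ μ a ≠ 0 ∧ μ b ≠ 0 := by
  obtain ⟨a, ha1, ha⟩ : ∃ a, a ≠ 1 ∧ μ a ≠ 0 := by
    by_contra! h
    have : ∑' k : ℕ, ENNReal.ofReal (((k : ℝ) - 1) ^ 2) * μ k = 0 :=
      ENNReal.tsum_eq_zero.mpr fun k => by rcases eq_or_ne k 1 with rfl | hk <;> simp [*]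
    rw [hvar, ENNReal.ofReal_eq_zero] at this
    linarith
  obtain ⟨b, hba, hb⟩ : ∃ b, b ≠ a ∧ μ b ≠ 0 := by
    by_contra! h
    have hμa : μ a = 1 := by rw [← hμ, tsum_eq_single a h]
    rw [tsum_eq_single a fun b hb => by simp [h b hb], hμa, mul_one] at hmean
    exact ha1 (by exact_mod_cast hmean)
  exact ⟨a, b, hba.symm, ha, hb⟩

theorem sup_x_mul_walkProb_lt_top_general (μ : ℕ → ℝ≥0∞) (σ2 : ℝ)
    (hμ : ∑' k, μ k = 1)
    (hmean : ∑' k : ℕ, (k : ℝ≥0∞) * μ k = 1)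
    (hvar : ∑' k : ℕ, ENNReal.ofReal (((k : ℝ) - 1) ^ 2) * μ k = ENNReal.ofReal σ2)
    (hσpos : 0 < σ2) :
    ∃ C : ℝ≥0∞, C < ⊤ ∧ ∀ n : ℕ, 1 ≤ n → ∀ x : ℕ, (x : ℝ≥0∞) * walkProb μ n (x : ℤ) ≤ C := by
  have h1 : tsumCoeff (mk μ) = 1 := by simpa [tsumCoeff_apply] using hμ
  have hm : tsumCoeff (eulerDerivation ℝ≥0∞ (mk μ)) = 1 := by
    simpa [tsumCoeff_eulerDerivation] using hmean
  have hs : tsumCoeff (eulerDerivation ℝ≥0∞ (eulerDerivation ℝ≥0∞ (mk μ)))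
      = ENNReal.ofReal σ2 + 1 := by
    rw [← tsum_ofReal_sq_sub_mul_coeff_add_sq h1 (m := 1) (by simpa using hm)]
    simpa using hvar
  obtain ⟨a, b, hab, ha, hb⟩ := exists_ne_and_ne_zero_of_variance_pos μ σ2 hμ hmean hvar hσpos
  obtain ⟨K, hK, hloc⟩ := exists_sqrt_mul_coeff_pow_le h1 hab (by simpa using ha)
    (by simpa using hb)
  refine ⟨K + 2 * (4 * ENNReal.ofReal σ2 * K), by finiteness, fun n _ x => ?_⟩
  rw [walkProb_natCast]
  exact natCast_mul_coeff_pow_le hloc (sq_mul_tsumCoeff_restrict_pow_le h1 hm hs) n x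

/-- If `μ` is a nondegenerate critical offspring distribution with finite nonzero
variance `σ²`, then `sup_{n ≥ 1} sup_{x ≥ 0} x · P(W_n = x) < ∞` for the random walk
with i.i.d. steps `ξ - 1`, `ξ ~ μ`. -/
theorem sup_x_mul_walkProb_lt_top (μ : ℕ → ℝ≥0∞) (σ2 : ℝ)
    (hμ : ∑' k, μ k = 1)
    (hmean : ∑' k : ℕ, (k : ℝ≥0∞) * μ k = 1)
    (hvar : ∑' k : ℕ, ENNReal.ofReal (((k : ℝ) - 1) ^ 2) * μ k = ENNReal.ofReal σ2)
    (hσpos : 0 < σ2)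
    (hnd : μ 0 + μ 1 ≠ 1) :
    ∃ C : ℝ≥0∞, C < ⊤ ∧ ∀ n : ℕ, 1 ≤ n → ∀ x : ℕ, (x : ℝ≥0∞) * walkProb μ n (x : ℤ) ≤ C :=
  sup_x_mul_walkProb_lt_top_general μ σ2 hμ hmean hvar hσpos
end

section
/- Suppose (X_n), (Y_n) are S-valued random variables such that for every ε > 0 there exist measurable sets A_n^ε with P(Y_n ∈ A_n^ε) ≥ 1 − ε for large n, and measurable functions f_n^ε on A_n^ε with P_{X_n} = f_n^ε P_{Y_n} on A_n^ε and sup_{x ∈ A_n^ε}|f_n^ε(x) − 1| → 0. Then if Y_n converges in distribution to Y, so does X_n. -/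
open MeasureTheory Filter Topology
open scoped ENNReal BoundedContinuousFunction

/-!
On `A_n^ε` the density bounds sandwich the law `ν n` between `(1 ∓ δ) • ρ n`, so for bounded `g`
the integrals over `A_n^ε` differ by at most `δ ‖g‖`. Off `A_n^ε` both integrals are bounded by
`‖g‖` times the mass of the complement, which is at most `ε` for `ρ n` and, by the lower density
bound, at most `ε + δ` for `ν n`. Hence `∫ g ∂ν n - ∫ g ∂ρ n → 0`.
-/

namespace MeasureTheory

variable {α : Type*} [MeasurableSpace α]

theorem Measure.restrict_eq_withDensity_of_setLIntegral {μ ν : Measure α} {A : Set α}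
    {f : α → ℝ≥0∞} (hA : MeasurableSet A)
    (h : ∀ B, MeasurableSet B → B ⊆ A → μ B = ∫⁻ x in B, f x ∂ν) :
    μ.restrict A = (ν.restrict A).withDensity f := by
  ext B hB
  rw [Measure.restrict_apply hB, withDensity_apply f hB, Measure.restrict_restrict hB]
  exact h _ (hB.inter hA) Set.inter_subset_right

theorem smul_restrict_le_withDensity {μ : Measure α} {A : Set α} {f : α → ℝ≥0∞} {c : ℝ≥0∞}
    (hA : MeasurableSet A) (hf : ∀ x ∈ A, c ≤ f x) :
    c • μ.restrict A ≤ (μ.restrict A).withDensity f :=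
  withDensity_const (μ := μ.restrict A) c ▸ withDensity_mono (ae_restrict_of_forall_mem hA hf)

theorem withDensity_restrict_le_smul {μ : Measure α} {A : Set α} {f : α → ℝ≥0∞} {c : ℝ≥0∞}
    (hA : MeasurableSet A) (hf : ∀ x ∈ A, f x ≤ c) :
    (μ.restrict A).withDensity f ≤ c • μ.restrict A :=
  withDensity_const (μ := μ.restrict A) c ▸ withDensity_mono (ae_restrict_of_forall_mem hA hf)

section Sandwich

variable {μ ν : Measure α} {δ : ℝ}

theorem abs_integral_sub_le_mul_integral_of_nonneg (hδ : 0 ≤ δ)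
    (hlow : ENNReal.ofReal (1 - δ) • ν ≤ μ) (hup : μ ≤ ENNReal.ofReal (1 + δ) • ν)
    {g : α → ℝ} (hg : 0 ≤ g) (hgμ : Integrable g μ) (hgν : Integrable g ν) :
    |∫ x, g x ∂μ - ∫ x, g x ∂ν| ≤ δ * ∫ x, g x ∂ν := by
  have hI : 0 ≤ ∫ x, g x ∂ν := integral_nonneg hg
  have hle := integral_mono_measure hup (ae_of_all _ hg) (hgν.smul_measure ENNReal.ofReal_ne_top)
  have hge := integral_mono_measure hlow (ae_of_all _ hg) hgμ
  rw [integral_smul_measure, ENNReal.toReal_ofReal (by linarith), smul_eq_mul] at hle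
  rw [integral_smul_measure, ENNReal.toReal_ofReal', smul_eq_mul] at hge
  rw [abs_le]
  constructor <;> nlinarith [le_max_left (1 - δ) 0]

theorem abs_integral_sub_le_mul_integral_abs (hδ : 0 ≤ δ)
    (hlow : ENNReal.ofReal (1 - δ) • ν ≤ μ) (hup : μ ≤ ENNReal.ofReal (1 + δ) • ν)
    {g : α → ℝ} (hgμ : Integrable g μ) (hgν : Integrable g ν) :
    |∫ x, g x ∂μ - ∫ x, g x ∂ν| ≤ δ * ∫ x, |g x| ∂ν := by
  have hpos := abs_integral_sub_le_mul_integral_of_nonneg hδ hlow hup (posPart_nonneg g)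
    hgμ.pos_part hgν.pos_part
  have hneg := abs_integral_sub_le_mul_integral_of_nonneg hδ hlow hup (negPart_nonneg g)
    hgμ.neg_part hgν.neg_part
  have hsplit : ∀ m : Measure α, Integrable g m → ∫ x, g x ∂m = ∫ x, g⁺ x ∂m - ∫ x, g⁻ x ∂m :=
    fun m hg => (congrArg (integral m) (posPart_sub_negPart g).symm).trans
      (integral_sub hg.pos_part hg.neg_part)
  have habs : ∫ x, |g x| ∂ν = ∫ x, g⁺ x ∂ν + ∫ x, g⁻ x ∂ν :=
    (congrArg (integral ν) (posPart_add_negPart g).symm).trans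
      (integral_add hgν.pos_part hgν.neg_part)
  rw [hsplit μ hgμ, hsplit ν hgν, habs]
  calc _ = |(∫ x, g⁺ x ∂μ - ∫ x, g⁺ x ∂ν) - (∫ x, g⁻ x ∂μ - ∫ x, g⁻ x ∂ν)| := by ring_nf
    _ ≤ |∫ x, g⁺ x ∂μ - ∫ x, g⁺ x ∂ν| + |∫ x, g⁻ x ∂μ - ∫ x, g⁻ x ∂ν| := abs_sub _ _
    _ ≤ _ := by rw [mul_add]; exact add_le_add hpos hneg

theorem abs_integral_sub_le_of_restrict [IsProbabilityMeasure μ] [IsProbabilityMeasure ν]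
    {A : Set α} (hA : MeasurableSet A) (hδ : 0 ≤ δ)
    (hlow : ENNReal.ofReal (1 - δ) • ν.restrict A ≤ μ.restrict A)
    (hup : μ.restrict A ≤ ENNReal.ofReal (1 + δ) • ν.restrict A)
    {g : α → ℝ} {C : ℝ} (hgμ : Integrable g μ) (hgν : Integrable g ν) (hC : ∀ x, ‖g x‖ ≤ C) :
    |∫ x, g x ∂μ - ∫ x, g x ∂ν| ≤ 2 * C * (δ + ν.real Aᶜ) := by
  have hC0 : 0 ≤ C := (norm_nonneg _).trans (hC (nonempty_of_isProbabilityMeasure μ).some)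
  have hmass : |μ.real A - ν.real A| ≤ δ * ν.real A := by
    simpa using abs_integral_sub_le_mul_integral_of_nonneg hδ hlow hup (g := fun _ => 1)
      (fun _ => zero_le_one) (integrable_const _) (integrable_const _)
  have hcompl : μ.real Aᶜ ≤ δ + ν.real Aᶜ := by
    rw [probReal_compl_eq_one_sub hA, probReal_compl_eq_one_sub hA]
    nlinarith [abs_le.1 hmass, measureReal_le_one (μ := ν) (s := A)]
  have hon : |∫ x in A, g x ∂μ - ∫ x in A, g x ∂ν| ≤ δ * C := by
    have hbound := norm_integral_le_of_norm_le_const (μ := ν.restrict A)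
      (f := fun x => |g x|) (ae_of_all _ fun x => by simpa using hC x)
    simp only [Real.norm_eq_abs, measureReal_restrict_apply_univ] at hbound
    calc _ ≤ δ * ∫ x in A, |g x| ∂ν :=
          abs_integral_sub_le_mul_integral_abs hδ hlow hup hgμ.restrict hgν.restrict
      _ ≤ δ * (C * ν.real A) := mul_le_mul_of_nonneg_left (le_abs_self _ |>.trans hbound) hδ
      _ ≤ δ * C := mul_le_mul_of_nonneg_left (mul_le_of_le_one_right hC0 measureReal_le_one) hδ
  have hoffμ := norm_setIntegral_le_of_norm_le_const (measure_lt_top μ Aᶜ) fun x _ => hC x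
  have hoffν := norm_setIntegral_le_of_norm_le_const (measure_lt_top ν Aᶜ) fun x _ => hC x
  rw [Real.norm_eq_abs] at hoffμ hoffν
  rw [← integral_add_compl hA hgμ, ← integral_add_compl hA hgν]
  calc _ = |(∫ x in A, g x ∂μ - ∫ x in A, g x ∂ν) + ∫ x in Aᶜ, g x ∂μ
          - ∫ x in Aᶜ, g x ∂ν| := by ring_nf
    _ ≤ δ * C + C * μ.real Aᶜ + C * ν.real Aᶜ :=
        (abs_sub _ _).trans (add_le_add ((abs_add_le _ _).trans (add_le_add hon hoffμ)) hoffν)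
    _ ≤ 2 * C * (δ + ν.real Aᶜ) := by nlinarith [mul_le_mul_of_nonneg_left hcompl hC0]

end Sandwich

end MeasureTheory

theorem tendsto_zero_of_forall_eventually_abs_le_mul {ι : Type*} {l : Filter ι} {u : ι → ℝ}
    (C : ℝ) (h : ∀ ε > 0, ∀ᶠ i in l, |u i| ≤ C * ε) : Tendsto u l (𝓝 0) := by
  rw [Metric.tendsto_nhds]
  intro r hr
  filter_upwards [h (r / (|C| + 1)) (by positivity)] with i hi
  rw [Real.dist_0_eq_abs]
  calc |u i| ≤ C * (r / (|C| + 1)) := hi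
    _ ≤ |C| * (r / (|C| + 1)) := by gcongr; exact le_abs_self C
    _ < r := by rw [mul_div_assoc', div_lt_iff₀ (by positivity)]; nlinarith

theorem weak_limit_transfer_of_local_density_general
    {S : Type*} [MeasurableSpace S] [TopologicalSpace S] [BorelSpace S]
    (ν ρ : ℕ → Measure S) (hν : ∀ n, IsProbabilityMeasure (ν n))
    (hρ : ∀ n, IsProbabilityMeasure (ρ n))
    (hloc : ∀ ε : ℝ, 0 < ε →
      ∃ (A : ℕ → Set S) (f : ℕ → S → ℝ≥0∞),
        (∀ n, MeasurableSet (A n)) ∧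
        (∀ᶠ n in atTop, 1 - ε ≤ (ρ n (A n)).toReal) ∧
        (∀ n, ∀ B : Set S, MeasurableSet B → B ⊆ A n →
          ν n B = ∫⁻ x in B, f n x ∂(ρ n)) ∧
        (∀ δ : ℝ, 0 < δ → ∀ᶠ n in atTop, ∀ x ∈ A n,
          ENNReal.ofReal (1 - δ) ≤ f n x ∧ f n x ≤ ENNReal.ofReal (1 + δ)))
    (μLim : Measure S)
    (hweak : ∀ g : S →ᵇ ℝ,
      Tendsto (fun n => ∫ x, g x ∂(ρ n)) atTop (nhds (∫ x, g x ∂μLim))) :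
    ∀ g : S →ᵇ ℝ,
      Tendsto (fun n => ∫ x, g x ∂(ν n)) atTop (nhds (∫ x, g x ∂μLim)) := by
  intro g
  have hdiff : Tendsto (fun n => ∫ x, g x ∂(ν n) - ∫ x, g x ∂(ρ n)) atTop (𝓝 0) := by
    refine tendsto_zero_of_forall_eventually_abs_le_mul (4 * ‖g‖) fun ε hε => ?_
    obtain ⟨A, f, hA, hρA, hdens, hf⟩ := hloc ε hε
    filter_upwards [hρA, hf ε hε] with n hρAn hfn
    have := hν n
    have := hρ n
    have hrestrict := Measure.restrict_eq_withDensity_of_setLIntegral (hA n) (hdens n)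
    calc _ ≤ 2 * ‖g‖ * (ε + (ρ n).real (A n)ᶜ) :=
          abs_integral_sub_le_of_restrict (hA n) hε.le
            (hrestrict ▸ smul_restrict_le_withDensity (hA n) fun x hx => (hfn x hx).1)
            (hrestrict ▸ withDensity_restrict_le_smul (hA n) fun x hx => (hfn x hx).2)
            (g.integrable _) (g.integrable _) g.norm_coe_le_norm
      _ ≤ 4 * ‖g‖ * ε := by
          rw [probReal_compl_eq_one_sub (hA n)]
          nlinarith [norm_nonneg g, show 1 - ε ≤ (ρ n).real (A n) from hρAn]
  simpa using hdiff.add (hweak g)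

/-- Weak-limit transfer under local density control: if for every `ε > 0` there are sets
`A_n^ε` of `Y_n`-probability at least `1-ε` (for large `n`) on which the law of `X_n` has a
density `f_n^ε` with respect to the law of `Y_n` with `sup_{A_n^ε} |f_n^ε - 1| → 0`, then
convergence in distribution of `Y_n` implies convergence in distribution of `X_n` to the
same limit. -/
theorem weak_limit_transfer_of_local_density
    {S : Type*} [MeasurableSpace S] [TopologicalSpace S] [PolishSpace S] [BorelSpace S]
    (ν ρ : ℕ → Measure S) (hν : ∀ n, IsProbabilityMeasure (ν n))
    (hρ : ∀ n, IsProbabilityMeasure (ρ n))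
    (hloc : ∀ ε : ℝ, 0 < ε →
      ∃ (A : ℕ → Set S) (f : ℕ → S → ℝ≥0∞),
        (∀ n, MeasurableSet (A n)) ∧
        (∀ᶠ n in atTop, 1 - ε ≤ (ρ n (A n)).toReal) ∧
        (∀ n, ∀ B : Set S, MeasurableSet B → B ⊆ A n →
          ν n B = ∫⁻ x in B, f n x ∂(ρ n)) ∧
        (∀ δ : ℝ, 0 < δ → ∀ᶠ n in atTop, ∀ x ∈ A n,
          ENNReal.ofReal (1 - δ) ≤ f n x ∧ f n x ≤ ENNReal.ofReal (1 + δ)))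
    (μLim : Measure S) (hμLim : IsProbabilityMeasure μLim)
    (hweak : ∀ g : S →ᵇ ℝ,
      Tendsto (fun n => ∫ x, g x ∂(ρ n)) atTop (nhds (∫ x, g x ∂μLim))) :
    ∀ g : S →ᵇ ℝ,
      Tendsto (fun n => ∫ x, g x ∂(ν n)) atTop (nhds (∫ x, g x ∂μLim)) :=
  weak_limit_transfer_of_local_density_general ν ρ hν hρ hloc μLim hweak
end
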